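/- arXiv:2405.11736 — 4 statements merged into one kernel-verified Lean document; each statement's English description precedes it below -/
import Mathlib

section
/- Let σ = (σ_0,…,σ_n) be a changemaker vector, let x be a positive integer, and let a be a nonnegative integer with a ≥ xp − |σ|₁. Then V^σ_{a+1} − V^σ_a ≥ x. -/
open Finset

/-- `σ` is a changemaker vector: all entries are positive and every integer `k` with
`0 ≤ k ≤ σ_0 + ⋯ + σ_n` is the sum of a subset of the entries. -/
def IsChangemaker {n : ℕ} (σ : Fin (n + 1) → ℕ) : Prop :=
  (∀ i, 0 < σ i) ∧
    ∀ k : ℕ, k ≤ ∑ i, σ i → ∃ A : Finset (Fin (n + 1)), ∑ i ∈ A, σ i = k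

/-- `Tcm σ m = T^σ_m`, the maximum of `σ·α` over all `α ∈ ℤ_{≥0}^{n+1}` with
`Σ_j α_j (α_j + 1) ≤ 2m` (the maximum exists: the set is nonempty and bounded). -/
noncomputable def Tcm {n : ℕ} (σ : Fin (n + 1) → ℕ) (m : ℕ) : ℕ :=
  sSup {t : ℕ | ∃ α : Fin (n + 1) → ℕ,
    (∑ j, α j * (α j + 1)) ≤ 2 * m ∧ t = ∑ j, σ j * α j}

/-- `Vcm σ i = V^σ_i`, the `i`-th relevant coefficient of `σ`:
the least `m` with `T^σ_m ≥ i` (and `V^σ_0 = 0`). -/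
noncomputable def Vcm {n : ℕ} (σ : Fin (n + 1) → ℕ) (i : ℕ) : ℕ :=
  sInf {m : ℕ | i ≤ Tcm σ m}

/-!
Let `α` attain `T_m ≥ a + 1` for `m = V_{a+1}`, and choose `j` maximising `(α_j + 1) / σ_j`.
Comparing `∑ σ_i (α_i + 1) ≥ a + 1 + |σ|₁ > x p` with `σ_j ∑ σ_i (α_i + 1) ≤ p (α_j + 1)` gives
`α_j + 1 > x σ_j`. The changemaker property provides `A ∌ j` with `∑_{i ∈ A} σ_i = σ_j - 1`;
lowering `α_j` by one and raising `α_i` by one for `i ∈ A` lowers `σ · α` by exactly one and, by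
the maximality of `j`, lowers `∑ α_i (α_i + 1)` by at least `2x`. Hence `T_{m - x} ≥ a`.
-/

section Exchange

variable {ι : Type*} [DecidableEq ι]

def exchange (α : ι → ℕ) (j : ι) (A : Finset ι) : ι → ℕ :=
  fun i => if i = j then α i - 1 else if i ∈ A then α i + 1 else α i

variable [Fintype ι]

lemma sum_add_eq_of_forall_add_ite_eq {F G u v : ι → ℕ} {j : ι} {A : Finset ι}
    (h : ∀ i, F i + (if i = j then u i else 0) = G i + (if i ∈ A then v i else 0)) :
    ∑ i, F i + u j = ∑ i, G i + ∑ i ∈ A, v i := by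
  have := Finset.sum_congr rfl fun i (_ : i ∈ univ) => h i
  simpa only [sum_add_distrib, sum_ite_eq', sum_ite_mem, mem_univ, if_true, univ_inter]
    using this

variable {α : ι → ℕ} {j : ι} {A : Finset ι}

lemma sum_mul_exchange_add (σ : ι → ℕ) (hjA : j ∉ A) (hj : 1 ≤ α j) :
    ∑ i, σ i * exchange α j A i + σ j = ∑ i, σ i * α i + ∑ i ∈ A, σ i := by
  refine sum_add_eq_of_forall_add_ite_eq fun i => ?_
  by_cases hij : i = j
  · subst hij
    obtain ⟨k, hk⟩ := Nat.exists_eq_add_of_le' hj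
    simp only [exchange, hjA, hk, if_true, if_false, Nat.add_sub_cancel]
    ring
  · by_cases hiA : i ∈ A <;> simp [exchange, hij, hiA, mul_add]

lemma sum_exchange_mul_succ_add (hjA : j ∉ A) (hj : 1 ≤ α j) :
    ∑ i, exchange α j A i * (exchange α j A i + 1) + 2 * α j =
      ∑ i, α i * (α i + 1) + ∑ i ∈ A, 2 * (α i + 1) := by
  refine sum_add_eq_of_forall_add_ite_eq (u := fun i => 2 * α i) fun i => ?_
  by_cases hij : i = j
  · subst hij
    obtain ⟨k, hk⟩ := Nat.exists_eq_add_of_le' hj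
    simp only [exchange, hjA, hk, if_true, if_false, Nat.add_sub_cancel]
    ring
  · by_cases hiA : i ∈ A
    · simp only [exchange, hij, hiA, if_true, if_false]
      ring
    · simp [exchange, hij, hiA]

end Exchange

lemma exists_forall_mul_le_mul {ι : Type*} [Fintype ι] [Nonempty ι] (f g : ι → ℕ)
    (hg : ∀ i, 0 < g i) : ∃ j, ∀ i, g j * f i ≤ g i * f j := by
  obtain ⟨j, -, hj⟩ := exists_max_image univ (fun i => (f i : ℚ) / g i) univ_nonempty
  refine ⟨j, fun i => ?_⟩
  have h := hj i (mem_univ i)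
  rw [div_le_div_iff₀ (by exact_mod_cast hg i) (by exact_mod_cast hg j)] at h
  exact_mod_cast (by linarith : (g j : ℚ) * f i ≤ g i * f j)

lemma mul_sum_mul_le_sum_mul_mul {ι : Type*} {f g : ι → ℕ} {j : ι}
    (hj : ∀ i, g j * f i ≤ g i * f j) (s : Finset ι) (w : ι → ℕ) :
    g j * ∑ i ∈ s, w i * f i ≤ (∑ i ∈ s, w i * g i) * f j := by
  rw [mul_sum, sum_mul]
  refine sum_le_sum fun i _ => ?_
  calc g j * (w i * f i) = w i * (g j * f i) := by ring
    _ ≤ w i * (g i * f j) := Nat.mul_le_mul_left _ (hj i)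
    _ = w i * g i * f j := by ring

section Tcm

variable {n : ℕ} (σ : Fin (n + 1) → ℕ)

lemma bddAbove_Tcm_set (m : ℕ) :
    BddAbove {t : ℕ | ∃ α : Fin (n + 1) → ℕ,
      (∑ j, α j * (α j + 1)) ≤ 2 * m ∧ t = ∑ j, σ j * α j} := by
  refine ⟨(∑ j, σ j) * (2 * m), ?_⟩
  rintro t ⟨α, hα, rfl⟩
  have hαm : ∀ j, α j ≤ 2 * m := fun j =>
    calc α j ≤ α j * (α j + 1) := Nat.le_mul_of_pos_right _ (Nat.succ_pos _)
      _ ≤ ∑ j, α j * (α j + 1) :=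
        single_le_sum (f := fun j => α j * (α j + 1)) (fun _ _ => Nat.zero_le _) (mem_univ j)
      _ ≤ 2 * m := hα
  rw [sum_mul]
  exact sum_le_sum fun j _ => Nat.mul_le_mul_left _ (hαm j)

lemma le_Tcm {m : ℕ} {α : Fin (n + 1) → ℕ} (h : ∑ j, α j * (α j + 1) ≤ 2 * m) :
    ∑ j, σ j * α j ≤ Tcm σ m :=
  le_csSup (bddAbove_Tcm_set σ m) ⟨α, h, rfl⟩

lemma exists_eq_Tcm (m : ℕ) :
    ∃ α : Fin (n + 1) → ℕ, ∑ j, α j * (α j + 1) ≤ 2 * m ∧ Tcm σ m = ∑ j, σ j * α j :=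
  Nat.sSup_mem (s := {t : ℕ | ∃ α : Fin (n + 1) → ℕ,
      (∑ j, α j * (α j + 1)) ≤ 2 * m ∧ t = ∑ j, σ j * α j}) ⟨0, 0, by simp, by simp⟩
    (bddAbove_Tcm_set σ m)

lemma le_Tcm_Vcm {j : Fin (n + 1)} (hj : 0 < σ j) (i : ℕ) : i ≤ Tcm σ (Vcm σ i) := by
  refine Nat.sInf_mem (s := {m : ℕ | i ≤ Tcm σ m}) ⟨(n + 1) * (i * (i + 1)), ?_⟩
  calc i ≤ σ j * i := Nat.le_mul_of_pos_left _ hj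
    _ ≤ (∑ k, σ k) * i :=
      Nat.mul_le_mul_right _ (single_le_sum (fun _ _ => Nat.zero_le _) (mem_univ j))
    _ = ∑ k, σ k * (fun _ => i) k := sum_mul ..
    _ ≤ Tcm σ ((n + 1) * (i * (i + 1))) := le_Tcm σ (by
      simp only [sum_const, card_univ, Fintype.card_fin, smul_eq_mul]
      exact Nat.le_mul_of_pos_left _ two_pos)

lemma Vcm_le_of_le_Tcm {i m : ℕ} (h : i ≤ Tcm σ m) : Vcm σ i ≤ m := Nat.sInf_le h

end Tcm

lemma exists_cheaper_of_isChangemaker {n : ℕ} {σ : Fin (n + 1) → ℕ} (hσ : IsChangemaker σ)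
    {x a : ℕ} (hx : 0 < x) (ha : x * ∑ i, σ i ^ 2 ≤ a + ∑ i, σ i) {α : Fin (n + 1) → ℕ}
    (hα : a + 1 ≤ ∑ i, σ i * α i) :
    ∃ β : Fin (n + 1) → ℕ, a ≤ ∑ i, σ i * β i ∧
      ∑ i, β i * (β i + 1) + 2 * x ≤ ∑ i, α i * (α i + 1) := by
  obtain ⟨hpos, hcm⟩ := hσ
  obtain ⟨j, hj⟩ := exists_forall_mul_le_mul (fun i => α i + 1) σ hpos
  have hxj : x * σ j < α j + 1 := by
    have hmax := mul_sum_mul_le_sum_mul_mul hj univ σ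
    have hsum : x * ∑ i, σ i ^ 2 < ∑ i, σ i * (α i + 1) := by
      simp only [mul_add, mul_one, sum_add_distrib]
      omega
    simp only [← sq] at hmax
    refine Nat.lt_of_mul_lt_mul_left (a := ∑ i, σ i ^ 2) ?_
    calc (∑ i, σ i ^ 2) * (x * σ j) = σ j * (x * ∑ i, σ i ^ 2) := by ring
      _ < σ j * ∑ i, σ i * (α i + 1) := Nat.mul_lt_mul_of_pos_left hsum (hpos j)
      _ ≤ _ := hmax
  have hαj : 1 ≤ α j := by nlinarith [hpos j]
  obtain ⟨A, hA⟩ := hcm (σ j - 1)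
    ((Nat.sub_le _ _).trans (single_le_sum (fun _ _ => Nat.zero_le _) (mem_univ j)))
  have hjA : j ∉ A := fun hjA => by
    have := single_le_sum (f := σ) (fun _ _ => Nat.zero_le _) hjA
    have := hpos j
    omega
  -- `σ j * ∑_{i ∈ A} (α i + 1) ≤ (σ j - 1) * (α j + 1)`, and `(α j + 1) / σ j > x`
  have hA_cost : ∑ i ∈ A, (α i + 1) + x ≤ α j := by
    have hmax := mul_sum_mul_le_sum_mul_mul hj A 1
    simp only [Pi.one_apply, one_mul, hA] at hmax
    obtain ⟨s, hs⟩ := Nat.exists_eq_add_of_le' (hpos j)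
    rw [hs, Nat.add_sub_cancel] at hmax
    rw [hs] at hxj
    nlinarith
  refine ⟨exchange α j A, ?_, ?_⟩
  · have := sum_mul_exchange_add σ hjA hαj
    have := hpos j
    omega
  · have := sum_exchange_mul_succ_add hjA hαj
    rw [← mul_sum] at this
    omega

theorem stmt_7 {n : ℕ} (σ : Fin (n + 1) → ℕ) (hσ : IsChangemaker σ)
    (x : ℕ) (hx : 0 < x) (a : ℕ)
    (ha : x * (∑ i, (σ i) ^ 2) ≤ a + ∑ i, σ i) :
    Vcm σ a + x ≤ Vcm σ (a + 1) := by
  obtain ⟨α, hα_cost, hα_eq⟩ := exists_eq_Tcm σ (Vcm σ (a + 1))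
  have hα : a + 1 ≤ ∑ j, σ j * α j := hα_eq ▸ le_Tcm_Vcm σ (hσ.1 0) (a + 1)
  obtain ⟨β, hβ, hβ_cost⟩ := exists_cheaper_of_isChangemaker hσ hx ha hα
  have : Vcm σ a ≤ Vcm σ (a + 1) - x :=
    Vcm_le_of_le_Tcm σ (hβ.trans (le_Tcm σ (by omega)))
  omega
end

section
/- Let σ = (σ_0,…,σ_n) be a changemaker vector. If p is even (so |σ|₁ is even), then V^σ_k = p/2 where k = p − |σ|₁/2. If p is odd (so |σ|₁ is odd), then V^σ_k = (p−1)/2 where k = p − (|σ|₁+1)/2. In other words, the index-i relevant coefficient with 2i = 2p − |σ|₁ (respectively 2i = 2p − |σ|₁ − 1) equals p/2 (respectively (p−1)/2). -/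
open Finset

lemma key_ineq (a b : ℕ) : 2 * (a * b) + a ≤ b * (b + 1) + a ^ 2 := by
  rcases le_total a b with h | h
  · obtain ⟨c, rfl⟩ := Nat.exists_eq_add_of_le h
    nlinarith
  · obtain ⟨c, rfl⟩ := Nat.exists_eq_add_of_le h
    nlinarith [Nat.le_self_pow two_ne_zero c]

lemma sum_ineq {n : ℕ} (σ α : Fin (n + 1) → ℕ) :
    2 * (∑ j, σ j * α j) + ∑ j, σ j ≤ (∑ j, α j * (α j + 1)) + ∑ j, σ j ^ 2 := by
  simp only [Finset.mul_sum, ← Finset.sum_add_distrib]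
  exact Finset.sum_le_sum fun j _ => key_ineq (σ j) (α j)

lemma tcm_zero_mem {n : ℕ} (σ : Fin (n + 1) → ℕ) (m : ℕ) :
    (0 : ℕ) ∈ {t : ℕ | ∃ α : Fin (n + 1) → ℕ,
      (∑ j, α j * (α j + 1)) ≤ 2 * m ∧ t = ∑ j, σ j * α j} :=
  ⟨fun _ => 0, by simp⟩

lemma tcm_bdd {n : ℕ} (σ : Fin (n + 1) → ℕ) (m : ℕ) :
    BddAbove {t : ℕ | ∃ α : Fin (n + 1) → ℕ,
      (∑ j, α j * (α j + 1)) ≤ 2 * m ∧ t = ∑ j, σ j * α j} := by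
  refine ⟨m + ∑ j, σ j ^ 2, fun t ht => ?_⟩
  obtain ⟨α, hc, rfl⟩ := ht
  have h := sum_ineq σ α
  omega

lemma tcm_mem {n : ℕ} (σ : Fin (n + 1) → ℕ) (m : ℕ) :
    Tcm σ m ∈ {t : ℕ | ∃ α : Fin (n + 1) → ℕ,
      (∑ j, α j * (α j + 1)) ≤ 2 * m ∧ t = ∑ j, σ j * α j} :=
  Nat.sSup_mem ⟨0, tcm_zero_mem σ m⟩ (tcm_bdd σ m)

lemma construct {n : ℕ} (σ : Fin (n + 1) → ℕ) (hpos : ∀ i, 0 < σ i)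
    (A : Finset (Fin (n + 1))) :
    (∑ j, σ j * (if j ∈ A then σ j - 1 else σ j)) + ∑ j ∈ A, σ j = ∑ j, σ j ^ 2 ∧
    (∑ j, (if j ∈ A then σ j - 1 else σ j) * ((if j ∈ A then σ j - 1 else σ j) + 1))
      + 2 * ∑ j ∈ A, σ j = (∑ j, σ j ^ 2) + ∑ j, σ j := by
  have hA : ∑ j ∈ A, σ j = ∑ j, (if j ∈ A then σ j else 0) := by
    rw [Finset.sum_ite_mem, Finset.univ_inter]
  constructor
  · rw [hA, ← Finset.sum_add_distrib]
    refine Finset.sum_congr rfl fun j _ => ?_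
    obtain ⟨c, hc⟩ := Nat.exists_eq_succ_of_ne_zero (hpos j).ne'
    split_ifs <;> simp [hc] <;> ring
  · rw [hA, Finset.mul_sum, ← Finset.sum_add_distrib, ← Finset.sum_add_distrib]
    refine Finset.sum_congr rfl fun j _ => ?_
    obtain ⟨c, hc⟩ := Nat.exists_eq_succ_of_ne_zero (hpos j).ne'
    split_ifs <;> simp [hc] <;> ring

lemma vcm_eq {n : ℕ} (σ : Fin (n + 1) → ℕ) (hσ : IsChangemaker σ)
    (k m₀ t : ℕ) (hts : t ≤ ∑ i, σ i)
    (hk : ∑ i, σ i ^ 2 = k + t)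
    (hm : 2 * m₀ + 2 * t = (∑ i, σ i ^ 2) + ∑ i, σ i) :
    Vcm σ k = m₀ := by
  obtain ⟨A, hA⟩ := hσ.2 t hts
  obtain ⟨h1, h2⟩ := construct σ hσ.1 A
  rw [hA] at h1 h2
  -- m₀ is in the set {m | k ≤ Tcm σ m}
  have hmem : k ≤ Tcm σ m₀ := by
    apply le_csSup (tcm_bdd σ m₀)
    refine ⟨fun j => if j ∈ A then σ j - 1 else σ j, ?_, ?_⟩ <;> · beta_reduce; omega
  refine le_antisymm (Nat.sInf_le hmem) ?_
  have hinf : Vcm σ k ∈ {m : ℕ | k ≤ Tcm σ m} := Nat.sInf_mem ⟨m₀, hmem⟩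
  obtain ⟨α, hc, he⟩ := tcm_mem σ (Vcm σ k)
  have hsi := sum_ineq σ α
  have hk' : k ≤ Tcm σ (Vcm σ k) := hinf
  omega

theorem stmt_10 {n : ℕ} (σ : Fin (n + 1) → ℕ) (hσ : IsChangemaker σ)
    (p s : ℕ) (hp : p = ∑ i, (σ i) ^ 2) (hs : s = ∑ i, σ i) :
    (Even p → ∀ k : ℕ, 2 * k + s = 2 * p → 2 * Vcm σ k = p) ∧
    (Odd p → ∀ k : ℕ, 2 * k + s + 1 = 2 * p → 2 * Vcm σ k = p - 1) := by
  have hsp : s ≤ p := by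
    rw [hp, hs]
    exact Finset.sum_le_sum fun i _ => Nat.le_self_pow two_ne_zero (σ i)
  have hs1 : 1 ≤ s := by
    rw [hs]
    calc 1 ≤ σ 0 := hσ.1 0
    _ ≤ ∑ i, σ i := Finset.single_le_sum (fun i _ => Nat.zero_le _) (Finset.mem_univ 0)
  constructor
  · intro hpe k hk
    obtain ⟨q, hq⟩ := hpe
    have := vcm_eq σ hσ k q (p - k) (by omega) (by omega) (by omega)
    omega
  · intro hpo k hk
    obtain ⟨q, hq⟩ := hpo
    have := vcm_eq σ hσ k q (p - k) (by omega) (by omega) (by omega)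
    omega
end

section
/- Let σ = (σ_0,…,σ_n) be a changemaker vector and let k = (p − |σ|₁)/2 (an integer since p ≡ |σ|₁ mod 2). Then 8·V^σ_k = p − odd(σ) if and only if the even entries of σ can be partitioned into two sets with equal sum, i.e. there exists a subset A of {i : σ_i is even} with Σ_{i∈A} σ_i = (1/2)·Σ_{i : σ_i even} σ_i. -/
open Finset

namespace CMaux

variable {n : ℕ}

lemma tset_bdd (σ : Fin (n + 1) → ℕ) (m : ℕ) :
    BddAbove {t : ℕ | ∃ α : Fin (n + 1) → ℕ,
      (∑ j, α j * (α j + 1)) ≤ 2 * m ∧ t = ∑ j, σ j * α j} := by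
  refine ⟨(∑ j, σ j) * (2 * m), ?_⟩
  rintro t ⟨α, hc, rfl⟩
  rw [Finset.sum_mul]
  refine Finset.sum_le_sum fun j _ => Nat.mul_le_mul_left _ ?_
  have h1 : α j ≤ α j * (α j + 1) := Nat.le_mul_of_pos_right _ (Nat.succ_pos _)
  exact h1.trans ((Finset.single_le_sum (fun i _ => Nat.zero_le _) (Finset.mem_univ j)).trans hc)

lemma le_tcm (σ : Fin (n + 1) → ℕ) {m : ℕ} (α : Fin (n + 1) → ℕ)
    (hc : (∑ j, α j * (α j + 1)) ≤ 2 * m) : (∑ j, σ j * α j) ≤ Tcm σ m :=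
  le_csSup (tset_bdd σ m) ⟨α, hc, rfl⟩

lemma tcm_mem (σ : Fin (n + 1) → ℕ) (m : ℕ) :
    ∃ α : Fin (n + 1) → ℕ, (∑ j, α j * (α j + 1)) ≤ 2 * m ∧ Tcm σ m = ∑ j, σ j * α j := by
  refine Nat.sSup_mem ⟨0, ?_⟩ (tset_bdd σ m)
  show ∃ α : Fin (n + 1) → ℕ, (∑ j, α j * (α j + 1)) ≤ 2 * m ∧ 0 = ∑ j, σ j * α j
  exact ⟨fun _ => 0, by simp, by simp⟩

lemma identity (σ : Fin (n + 1) → ℕ) (α : Fin (n + 1) → ℕ) :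
    ∑ j, ((2 * (α j : ℤ) + 1) - σ j) ^ 2
      = 4 * (∑ j, (α j : ℤ) * (α j + 1)) + (n + 1) - 4 * (∑ j, (σ j : ℤ) * α j)
        - 2 * (∑ j, (σ j : ℤ)) + ∑ j, (σ j : ℤ) ^ 2 := by
  have h : ∑ j, (((2 * (α j : ℤ) + 1) - σ j) ^ 2
      - (4 * ((α j : ℤ) * (α j + 1)) + 1 - 4 * ((σ j : ℤ) * α j)
        - 2 * (σ j : ℤ) + (σ j : ℤ) ^ 2)) = 0 :=
    Finset.sum_eq_zero fun j _ => by ring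
  simp only [Finset.sum_sub_distrib, Finset.sum_add_distrib, ← Finset.mul_sum,
    Finset.sum_const, Finset.card_univ, Fintype.card_fin, nsmul_eq_mul, mul_one] at h
  push_cast at h ⊢
  linarith

lemma one_le_sq (a s : ℕ) (hs : Even s) : (1 : ℤ) ≤ ((2 * (a : ℤ) + 1) - s) ^ 2 := by
  obtain ⟨r, hr⟩ := hs
  have hne : (2 * (a : ℤ) + 1) - s ≠ 0 := by omega
  rcases lt_or_gt_of_ne hne with h | h <;> nlinarith

lemma key_lb (σ : Fin (n + 1) → ℕ) (α : Fin (n + 1) → ℕ) :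
    ((univ.filter (fun i => Even (σ i))).card : ℤ)
      ≤ ∑ j, ((2 * (α j : ℤ) + 1) - σ j) ^ 2 := by
  calc ((univ.filter (fun i => Even (σ i))).card : ℤ)
      = ∑ _j ∈ univ.filter (fun i => Even (σ i)), (1 : ℤ) := by simp
    _ ≤ ∑ j ∈ univ.filter (fun i => Even (σ i)), ((2 * (α j : ℤ) + 1) - σ j) ^ 2 :=
        Finset.sum_le_sum fun j hj => one_le_sq _ _ (Finset.mem_filter.mp hj).2
    _ ≤ ∑ j, ((2 * (α j : ℤ) + 1) - σ j) ^ 2 :=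
        Finset.sum_le_sum_of_subset_of_nonneg (Finset.filter_subset _ _)
          fun j _ _ => sq_nonneg _

lemma filter_not_odd (σ : Fin (n + 1) → ℕ) :
    univ.filter (fun i => ¬ Odd (σ i)) = univ.filter (fun i => Even (σ i)) := by
  apply Finset.filter_congr
  intro i _
  simp [Nat.not_odd_iff_even]

lemma card_OE (σ : Fin (n + 1) → ℕ) :
    (univ.filter (fun i => Odd (σ i))).card + (univ.filter (fun i => Even (σ i))).card
      = n + 1 := by
  rw [← filter_not_odd σ, Finset.card_filter_add_card_filter_not,
    Finset.card_univ, Fintype.card_fin]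

lemma sum_OE (σ : Fin (n + 1) → ℕ) (f : Fin (n + 1) → ℤ) :
    ∑ j ∈ univ.filter (fun i => Odd (σ i)), f j
      + ∑ j ∈ univ.filter (fun i => Even (σ i)), f j = ∑ j, f j := by
  rw [← filter_not_odd σ]
  exact Finset.sum_filter_add_sum_filter_not _ _ f

lemma dot_identity (σ : Fin (n + 1) → ℕ) (α : Fin (n + 1) → ℕ) :
    ∑ j, (σ j : ℤ) * ((2 * (α j : ℤ) + 1) - σ j)
      = 2 * (∑ j, (σ j : ℤ) * α j) + (∑ j, (σ j : ℤ)) - ∑ j, (σ j : ℤ) ^ 2 := by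
  have h : ∑ j, ((σ j : ℤ) * ((2 * (α j : ℤ) + 1) - σ j)
      - (2 * ((σ j : ℤ) * α j) + (σ j : ℤ) - (σ j : ℤ) ^ 2)) = 0 :=
    Finset.sum_eq_zero fun j _ => by ring
  simp only [Finset.sum_sub_distrib, Finset.sum_add_distrib, ← Finset.mul_sum] at h
  linarith

lemma mem_bound (σ : Fin (n + 1) → ℕ) {k m : ℕ}
    (hk : 2 * k + (∑ i, σ i) = ∑ i, (σ i) ^ 2) (h : k ≤ Tcm σ m) :
    (∑ i, (σ i) ^ 2) ≤ 8 * m + (univ.filter (fun i => Odd (σ i))).card := by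
  obtain ⟨α, hc, hT⟩ := tcm_mem σ m
  have hkD : k ≤ ∑ j, σ j * α j := hT ▸ h
  have hid := identity σ α
  have hlb := key_lb σ α
  have hcard := card_OE σ
  have hc' : (∑ j, (α j : ℤ) * (α j + 1)) ≤ 2 * m := by exact_mod_cast hc
  have hkD' : (k : ℤ) ≤ ∑ j, (σ j : ℤ) * α j := by exact_mod_cast hkD
  have hk' : 2 * (k : ℤ) + (∑ i, (σ i : ℤ)) = ∑ i, (σ i : ℤ) ^ 2 := by exact_mod_cast hk
  have hcard' : ((univ.filter (fun i => Odd (σ i))).card : ℤ)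
      + ((univ.filter (fun i => Even (σ i))).card : ℤ) = (n : ℤ) + 1 := by exact_mod_cast hcard
  have : (∑ i, (σ i : ℤ) ^ 2) ≤ 8 * m + ((univ.filter (fun i => Odd (σ i))).card : ℤ) := by
    linarith
  exact_mod_cast this

end CMaux

theorem stmt_12 {n : ℕ} (σ : Fin (n + 1) → ℕ) (hσ : IsChangemaker σ)
    (k : ℕ) (hk : 2 * k + (∑ i, σ i) = ∑ i, (σ i) ^ 2) :
    8 * Vcm σ k + (Finset.univ.filter (fun i => Odd (σ i))).card =
        (∑ i, (σ i) ^ 2) ↔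
      ∃ A : Finset (Fin (n + 1)),
        A ⊆ Finset.univ.filter (fun i => Even (σ i)) ∧
        2 * ∑ i ∈ A, σ i =
          ∑ i ∈ Finset.univ.filter (fun i => Even (σ i)), σ i := by
  classical
  have hk' : 2 * (k : ℤ) + (∑ i, (σ i : ℤ)) = ∑ i, (σ i : ℤ) ^ 2 := by exact_mod_cast hk
  have hcard' : ((univ.filter (fun i => Odd (σ i))).card : ℤ)
      + ((univ.filter (fun i => Even (σ i))).card : ℤ) = (n : ℤ) + 1 := by
    exact_mod_cast CMaux.card_OE σ
  constructor
  · -- forward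
    intro h
    -- nonemptiness of the Vcm index set
    have hne : k ≤ Tcm σ (k * (k + 1)) := by
      set α0 : Fin (n + 1) → ℕ := fun j => if j = 0 then k else 0 with hα0
      have hcost : ∑ j, α0 j * (α0 j + 1) = k * (k + 1) := by
        simp [hα0, apply_ite (fun x => x * (x + 1)), Finset.sum_ite_eq']
      have hdot : ∑ j, σ j * α0 j = σ 0 * k := by
        simp [hα0, mul_ite, Finset.sum_ite_eq']
      have h1 := CMaux.le_tcm σ α0 (m := k * (k + 1)) (by rw [hcost]; omega)
      rw [hdot] at h1
      exact le_trans (Nat.le_mul_of_pos_left k (hσ.1 0)) h1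
    have hVmem : k ≤ Tcm σ (Vcm σ k) :=
      Nat.sInf_mem (⟨k * (k + 1), hne⟩ : {m : ℕ | k ≤ Tcm σ m}.Nonempty)
    obtain ⟨α, hc, hT⟩ := CMaux.tcm_mem σ (Vcm σ k)
    have hkD : k ≤ ∑ j, σ j * α j := hT ▸ hVmem
    have hid := CMaux.identity σ α
    have hlb := CMaux.key_lb σ α
    have hc' : (∑ j, (α j : ℤ) * (α j + 1)) ≤ 2 * (Vcm σ k : ℤ) := by exact_mod_cast hc
    have hkD' : (k : ℤ) ≤ ∑ j, (σ j : ℤ) * α j := by exact_mod_cast hkD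
    have h' : 8 * (Vcm σ k : ℤ) + ((univ.filter (fun i => Odd (σ i))).card : ℤ)
        = ∑ i, (σ i : ℤ) ^ 2 := by exact_mod_cast h
    have hDk : (∑ j, (σ j : ℤ) * α j) = k := by linarith
    have hSb : (∑ j, ((2 * (α j : ℤ) + 1) - σ j) ^ 2)
        = ((univ.filter (fun i => Even (σ i))).card : ℤ) := by linarith
    -- split the square-sum over odd/even parts
    have hsplit := CMaux.sum_OE σ (fun j => ((2 * (α j : ℤ) + 1) - σ j) ^ 2)
    have hEge : ((univ.filter (fun i => Even (σ i))).card : ℤ)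
        ≤ ∑ j ∈ univ.filter (fun i => Even (σ i)), ((2 * (α j : ℤ) + 1) - σ j) ^ 2 := by
      calc ((univ.filter (fun i => Even (σ i))).card : ℤ)
          = ∑ _j ∈ univ.filter (fun i => Even (σ i)), (1 : ℤ) := by simp
        _ ≤ _ := Finset.sum_le_sum fun j hj =>
            CMaux.one_le_sq _ _ (Finset.mem_filter.mp hj).2
    have hOge : 0 ≤ ∑ j ∈ univ.filter (fun i => Odd (σ i)), ((2 * (α j : ℤ) + 1) - σ j) ^ 2 :=
      Finset.sum_nonneg fun j _ => sq_nonneg _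
    have hEeq : ∑ j ∈ univ.filter (fun i => Even (σ i)), ((2 * (α j : ℤ) + 1) - σ j) ^ 2
        = ((univ.filter (fun i => Even (σ i))).card : ℤ) := by linarith
    have hOeq : ∑ j ∈ univ.filter (fun i => Odd (σ i)), ((2 * (α j : ℤ) + 1) - σ j) ^ 2
        = 0 := by linarith
    -- per-term equalities
    have hO0 : ∀ j ∈ univ.filter (fun i => Odd (σ i)), (2 * (α j : ℤ) + 1) - σ j = 0 := by
      intro j hj
      have := (Finset.sum_eq_zero_iff_of_nonneg (fun i _ => sq_nonneg _)).mp hOeq j hj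
      exact pow_eq_zero_iff (by norm_num) |>.mp this
    have hE1 : ∀ j ∈ univ.filter (fun i => Even (σ i)),
        ((2 * (α j : ℤ) + 1) - σ j) ^ 2 = 1 := by
      intro j hj
      have hz : ∑ j ∈ univ.filter (fun i => Even (σ i)),
          (((2 * (α j : ℤ) + 1) - σ j) ^ 2 - 1) = 0 := by
        rw [Finset.sum_sub_distrib, Finset.sum_const, nsmul_eq_mul, mul_one, hEeq, sub_self]
      have := (Finset.sum_eq_zero_iff_of_nonneg (fun i hi => by
        have := CMaux.one_le_sq (α i) (σ i) (Finset.mem_filter.mp hi).2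
        linarith)).mp hz j hj
      linarith
    -- dot product equality
    have hdot0 : ∑ j, (σ j : ℤ) * ((2 * (α j : ℤ) + 1) - σ j) = 0 := by
      rw [CMaux.dot_identity σ α]; linarith
    have hdsplit := CMaux.sum_OE σ (fun j => (σ j : ℤ) * ((2 * (α j : ℤ) + 1) - σ j))
    have hdO : ∑ j ∈ univ.filter (fun i => Odd (σ i)),
        (σ j : ℤ) * ((2 * (α j : ℤ) + 1) - σ j) = 0 :=
      Finset.sum_eq_zero fun j hj => by rw [hO0 j hj, mul_zero]
    have hdE : ∑ j ∈ univ.filter (fun i => Even (σ i)),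
        (σ j : ℤ) * ((2 * (α j : ℤ) + 1) - σ j) = 0 := by linarith
    -- define the subset A
    refine ⟨(univ.filter (fun i => Even (σ i))).filter (fun j => 2 * α j + 1 = σ j + 1),
      Finset.filter_subset _ _, ?_⟩
    have hsplitA := Finset.sum_filter_add_sum_filter_not (univ.filter (fun i => Even (σ i)))
      (fun j => 2 * α j + 1 = σ j + 1) (fun j => (σ j : ℤ) * ((2 * (α j : ℤ) + 1) - σ j))
    have hApart : ∑ j ∈ (univ.filter (fun i => Even (σ i))).filter
          (fun j => 2 * α j + 1 = σ j + 1),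
        (σ j : ℤ) * ((2 * (α j : ℤ) + 1) - σ j)
        = ∑ j ∈ (univ.filter (fun i => Even (σ i))).filter
          (fun j => 2 * α j + 1 = σ j + 1), (σ j : ℤ) := by
      refine Finset.sum_congr rfl fun j hj => ?_
      have h2 : 2 * α j + 1 = σ j + 1 := (Finset.mem_filter.mp hj).2
      have : (2 * (α j : ℤ) + 1) - σ j = 1 := by omega
      rw [this, mul_one]
    have hBpart : ∑ j ∈ (univ.filter (fun i => Even (σ i))).filter
          (fun j => ¬ (2 * α j + 1 = σ j + 1)),
        (σ j : ℤ) * ((2 * (α j : ℤ) + 1) - σ j)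
        = - ∑ j ∈ (univ.filter (fun i => Even (σ i))).filter
          (fun j => ¬ (2 * α j + 1 = σ j + 1)), (σ j : ℤ) := by
      rw [← Finset.sum_neg_distrib]
      refine Finset.sum_congr rfl fun j hj => ?_
      obtain ⟨hjE, hjne⟩ := Finset.mem_filter.mp hj
      have hsq := hE1 j hjE
      have hfac : (((2 * (α j : ℤ) + 1) - σ j) - 1) * (((2 * (α j : ℤ) + 1) - σ j) + 1) = 0 := by
        linear_combination hsq
      rcases mul_eq_zero.mp hfac with hca | hca
      · exfalso; apply hjne; omega
      · have : (2 * (α j : ℤ) + 1) - σ j = -1 := by linarith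
        rw [this]; ring
    have hsumsplit := Finset.sum_filter_add_sum_filter_not (univ.filter (fun i => Even (σ i)))
      (fun j => 2 * α j + 1 = σ j + 1) (fun j => (σ j : ℤ))
    have hfin : 2 * ∑ j ∈ (univ.filter (fun i => Even (σ i))).filter
          (fun j => 2 * α j + 1 = σ j + 1), (σ j : ℤ)
        = ∑ j ∈ univ.filter (fun i => Even (σ i)), (σ j : ℤ) := by linarith
    exact_mod_cast hfin
  · -- backward
    rintro ⟨A, hA, hsum⟩
    have hAeven : ∀ j ∈ A, Even (σ j) := fun j hj => (Finset.mem_filter.mp (hA hj)).2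
    set α : Fin (n + 1) → ℕ := fun j =>
      if Odd (σ j) then σ j / 2 else if j ∈ A then σ j / 2 else σ j / 2 - 1 with hαdef
    have hbO : ∀ j, Odd (σ j) → (2 * (α j : ℤ) + 1) = σ j := by
      intro j hj
      have h1 : α j = σ j / 2 := by simp [hαdef, hj]
      obtain ⟨r, hr⟩ := hj
      rw [h1]; omega
    have hbA : ∀ j ∈ A, (2 * (α j : ℤ) + 1) = σ j + 1 := by
      intro j hj
      have he := hAeven j hj
      have hno : ¬ Odd (σ j) := by simp [Nat.not_odd_iff_even, he]
      have h1 : α j = σ j / 2 := by simp [hαdef, hno, hj]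
      obtain ⟨r, hr⟩ := he
      rw [h1]; omega
    have hbB : ∀ j ∈ univ.filter (fun i => Even (σ i)), j ∉ A →
        (2 * (α j : ℤ) + 1) = (σ j : ℤ) - 1 := by
      intro j hj hjA
      have he : Even (σ j) := (Finset.mem_filter.mp hj).2
      have hno : ¬ Odd (σ j) := by simp [Nat.not_odd_iff_even, he]
      have h1 : α j = σ j / 2 - 1 := by simp [hαdef, hno, hjA]
      obtain ⟨r, hr⟩ := he
      have hpos := hσ.1 j
      rw [h1]; omega
    -- sum computations
    have hsdiff : ∀ f : Fin (n + 1) → ℤ,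
        ∑ j ∈ univ.filter (fun i => Even (σ i)) \ A, f j + ∑ j ∈ A, f j
          = ∑ j ∈ univ.filter (fun i => Even (σ i)), f j :=
      fun f => Finset.sum_sdiff hA
    have hdO : ∑ j ∈ univ.filter (fun i => Odd (σ i)),
        (σ j : ℤ) * ((2 * (α j : ℤ) + 1) - σ j) = 0 :=
      Finset.sum_eq_zero fun j hj => by
        rw [hbO j (Finset.mem_filter.mp hj).2, sub_self, mul_zero]
    have hdA : ∑ j ∈ A, (σ j : ℤ) * ((2 * (α j : ℤ) + 1) - σ j) = ∑ j ∈ A, (σ j : ℤ) :=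
      Finset.sum_congr rfl fun j hj => by rw [hbA j hj]; ring
    have hdB : ∑ j ∈ univ.filter (fun i => Even (σ i)) \ A,
        (σ j : ℤ) * ((2 * (α j : ℤ) + 1) - σ j)
        = - ∑ j ∈ univ.filter (fun i => Even (σ i)) \ A, (σ j : ℤ) := by
      rw [← Finset.sum_neg_distrib]
      refine Finset.sum_congr rfl fun j hj => ?_
      obtain ⟨hjE, hjA⟩ := Finset.mem_sdiff.mp hj
      rw [hbB j hjE hjA]; ring
    have hsum' : 2 * ∑ j ∈ A, (σ j : ℤ) = ∑ j ∈ univ.filter (fun i => Even (σ i)), (σ j : ℤ) := by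
      exact_mod_cast hsum
    have hdot0 : ∑ j, (σ j : ℤ) * ((2 * (α j : ℤ) + 1) - σ j) = 0 := by
      rw [← CMaux.sum_OE σ]
      have := hsdiff (fun j => (σ j : ℤ) * ((2 * (α j : ℤ) + 1) - σ j))
      have h2 := hsdiff (fun j => (σ j : ℤ))
      linarith
    have hsqO : ∑ j ∈ univ.filter (fun i => Odd (σ i)),
        ((2 * (α j : ℤ) + 1) - σ j) ^ 2 = 0 :=
      Finset.sum_eq_zero fun j hj => by
        rw [hbO j (Finset.mem_filter.mp hj).2, sub_self]; ring
    have hsqA : ∑ j ∈ A, ((2 * (α j : ℤ) + 1) - σ j) ^ 2 = ∑ _j ∈ A, (1 : ℤ) :=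
      Finset.sum_congr rfl fun j hj => by rw [hbA j hj]; ring
    have hsqB : ∑ j ∈ univ.filter (fun i => Even (σ i)) \ A,
        ((2 * (α j : ℤ) + 1) - σ j) ^ 2
        = ∑ _j ∈ univ.filter (fun i => Even (σ i)) \ A, (1 : ℤ) := by
      refine Finset.sum_congr rfl fun j hj => ?_
      obtain ⟨hjE, hjA⟩ := Finset.mem_sdiff.mp hj
      rw [hbB j hjE hjA]; ring
    have hsq : ∑ j, ((2 * (α j : ℤ) + 1) - σ j) ^ 2
        = ((univ.filter (fun i => Even (σ i))).card : ℤ) := by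
      rw [← CMaux.sum_OE σ]
      have h1 := hsdiff (fun j => ((2 * (α j : ℤ) + 1) - σ j) ^ 2)
      have h2 := hsdiff (fun _ => (1 : ℤ))
      have h3 : ∑ _j ∈ univ.filter (fun i => Even (σ i)), (1 : ℤ)
          = ((univ.filter (fun i => Even (σ i))).card : ℤ) := by simp
      linarith
    -- extract D = k and 4C + |O| = p
    have hid := CMaux.identity σ α
    have hdid := CMaux.dot_identity σ α
    have hDk : (∑ j, (σ j : ℤ) * α j) = k := by linarith
    have hC : 4 * (∑ j, (α j : ℤ) * (α j + 1))
        + ((univ.filter (fun i => Odd (σ i))).card : ℤ) = ∑ i, (σ i : ℤ) ^ 2 := by linarith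
    have hCn : 4 * (∑ j, α j * (α j + 1)) + (univ.filter (fun i => Odd (σ i))).card
        = ∑ i, (σ i) ^ 2 := by exact_mod_cast hC
    have hDn : (∑ j, σ j * α j) = k := by exact_mod_cast hDk
    have hCeven : Even (∑ j, α j * (α j + 1)) :=
      Finset.even_sum _ fun j _ => Nat.even_mul_succ_self (α j)
    obtain ⟨m, hm⟩ := hCeven
    have hmT : k ≤ Tcm σ m := by
      have := CMaux.le_tcm σ α (m := m) (by omega)
      omega
    have hVle : Vcm σ k ≤ m := Nat.sInf_le hmT
    have hVmem : k ≤ Tcm σ (Vcm σ k) :=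
      Nat.sInf_mem (⟨m, hmT⟩ : {m' : ℕ | k ≤ Tcm σ m'}.Nonempty)
    have hlow := CMaux.mem_bound σ hk hVmem
    omega
end

section
/- Fix an integer s ≥ 5 and let σ = (4s+3, 2s+1, s+1, s, 1, …, 1) with s trailing entries equal to 1. Then T^σ_{300} = 110s + 80; that is, 110s + 80 is the greatest element of {σ·α : α ∈ ℤ_{≥0}^{s+4}, Σ_j α_j(α_j+1) ≤ 600}. -/
open Finset

/-!
Write `a, b, c, d` for the first four coordinates of `α` and `r` for the sum of the others.
Since `x (x + 1) ≥ 2x`, the budget gives `a(a+1) + b(b+1) + c(c+1) + d(d+1) + 2r ≤ 600`,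
and `σ·α = s (4a + 2b + c + d) + (3a + b + c + r)` is affine in `s`. Two quadratic
certificates bound its slope, `4a + 2b + c + d ≤ 110`, and its value at `s = 5`, which is
`23a + 11b + 6c + 5d + r ≤ 630`; together they give `σ·α ≤ 110 s + 80` for all `s ≥ 5`.
The bound is attained at `α = (20, 10, 5, 5, 1, 1, 1, 1, 1, 0, …, 0)`, which costs exactly `600`.
-/

theorem Tcm_eq_of_forall_le {n : ℕ} {σ : Fin (n + 1) → ℕ} {m t : ℕ}
    (hle : ∀ α : Fin (n + 1) → ℕ, ∑ j, α j * (α j + 1) ≤ 2 * m → ∑ j, σ j * α j ≤ t)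
    (hmem : ∃ α : Fin (n + 1) → ℕ, ∑ j, α j * (α j + 1) ≤ 2 * m ∧ ∑ j, σ j * α j = t) :
    Tcm σ m = t := by
  obtain ⟨α, hα, rfl⟩ := hmem
  exact IsGreatest.csSup_eq ⟨⟨α, hα, rfl⟩, by rintro _ ⟨β, hβ, rfl⟩; exact hle β hβ⟩

theorem Int.mul_add_one_nonneg (x : ℤ) : 0 ≤ x * (x + 1) := by
  rcases le_or_gt 0 x with h | h <;> nlinarith

theorem two_mul_le_mul_add_one (x : ℕ) : 2 * x ≤ x * (x + 1) := by
  rcases x with _ | x <;> nlinarith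

theorem two_mul_sum_le_sum_mul_add_one {ι : Type*} (t : Finset ι) (x : ι → ℕ) :
    2 * ∑ i ∈ t, x i ≤ ∑ i ∈ t, x i * (x i + 1) := by
  rw [mul_sum]
  exact sum_le_sum fun i _ => two_mul_le_mul_add_one (x i)

theorem slope_le_of_cost_le (a b c d : ℤ)
    (h : a * (a + 1) + b * (b + 1) + c * (c + 1) + d * (d + 1) ≤ 600) :
    4 * a + 2 * b + c + d ≤ 110 := by
  have : 41 * (4 * a + 2 * b + c + d) ≤ 4550 := by
    nlinarith [sq_nonneg (a - 20), Int.mul_add_one_nonneg (b - 10), sq_nonneg (b - 10),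
      Int.mul_add_one_nonneg (c - 5), sq_nonneg (c - 5), Int.mul_add_one_nonneg (d - 5),
      sq_nonneg (d - 5)]
  omega

theorem value_at_five_le_of_cost_le (a b c d r : ℤ) (hr : 0 ≤ r)
    (h : a * (a + 1) + b * (b + 1) + c * (c + 1) + d * (d + 1) + 2 * r ≤ 600) :
    23 * a + 11 * b + 6 * c + 5 * d + r ≤ 630 := by
  have : 31 * (23 * a + 11 * b + 6 * c + 5 * d + r) ≤ 19560 := by
    nlinarith [Int.mul_add_one_nonneg (a - 21), sq_nonneg (a - 20),
      Int.mul_add_one_nonneg (b - 10), sq_nonneg (b - 10), Int.mul_add_one_nonneg (c - 6),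
      Int.mul_add_one_nonneg (c - 5), Int.mul_add_one_nonneg (d - 5),
      Int.mul_add_one_nonneg (d - 4), sq_nonneg (d - 4)]
  omega

theorem objective_le_of_cost_le {s : ℕ} (hs : 5 ≤ s) (a b c d r : ℕ)
    (h : a * (a + 1) + (b * (b + 1) + (c * (c + 1) + (d * (d + 1) + 2 * r))) ≤ 600) :
    (4 * s + 3) * a + ((2 * s + 1) * b + ((s + 1) * c + (s * d + r))) ≤ 110 * s + 80 := by
  zify at hs h ⊢
  have hslope := slope_le_of_cost_le a b c d (by nlinarith)
  have hfive := value_at_five_le_of_cost_le a b c d r (by positivity) (by linarith)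
  nlinarith [mul_nonneg (sub_nonneg.2 hs) (sub_nonneg.2 hslope)]

theorem stmt_15 (s : ℕ) (hs : 5 ≤ s) (σ : Fin (s + 3 + 1) → ℕ)
    (hσ : σ = fun j : Fin (s + 3 + 1) => if j.val = 0 then 4 * s + 3
      else if j.val = 1 then 2 * s + 1
      else if j.val = 2 then s + 1
      else if j.val = 3 then s else 1) :
    Tcm σ 300 = 110 * s + 80 := by
  subst hσ
  apply Tcm_eq_of_forall_le
  · intro α hα
    simp only [Fin.sum_univ_succ, Fin.succ_zero_eq_one, Fin.succ_one_eq_two, Nat.reduceMul,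
      Fin.val_eq_zero_iff, ite_mul, one_mul, ↓reduceIte, Fin.succ_ne_zero, Fin.val_succ,
      Nat.add_eq_right, Nat.reduceEqDiff] at hα ⊢
    exact objective_le_of_cost_le hs _ _ _ _ _
      (le_trans (by gcongr; exact two_mul_sum_le_sum_mul_add_one _ _) hα)
  · refine ⟨Fin.cons 20 (Fin.cons 10 (Fin.cons 5 (Fin.cons 5
      fun i : Fin s => if (i : ℕ) < 5 then 1 else 0))), ?_, ?_⟩
    · simp +contextual [Fin.sum_univ_succ, sum_ite, Fin.card_filter_val_lt, hs]
    · simp [Fin.sum_univ_succ, Fin.card_filter_val_lt, hs]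
      ring
end
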